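/- Let G be an Abelian group, f : {0,1}^n → G a function, and suppose that for every quotient group G/H of G by a cyclic subgroup H of prime order, and every function g : {0,1}^n → G/H, the number of degree-≤d polynomials over G/H that agree with g on at least a (1 − 2^{-d} + ε) fraction of points is at most L (assume this holds for every prime dividing |G|). Additionally assume that for each such prime p, degree-≤d polynomial spaces over ℤ_p satisfy the same L bound. Then the number of degree-≤d polynomials P over G with Pr_x[f(x) = P(x)] ≥ 1 − 2^{-d} + ε is at most (1/ε)^{⌈log₂ L⌉}. -/
import Mathlib


open Finset
open scoped Classical

universe u

/-- Evaluation of a multilinear polynomial with coefficients `c` over an Abelian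
group at a point of the Boolean cube. -/
def evalPoly {G : Type*} [AddCommMonoid G] {n : ℕ} (c : Finset (Fin n) → G)
    (x : Fin n → Bool) : G :=
  ∑ S : Finset (Fin n), if ∀ i ∈ S, x i = true then c S else 0

/-- The set of degree-`≤d` polynomials over `G` that agree with `g` on at least a
`(1 − 2^{-d} + ε)` fraction of `{0,1}ⁿ`. -/
def agreeList {G : Type*} [AddCommMonoid G] (n d : ℕ) (ε : ℝ)
    (g : (Fin n → Bool) → G) : Set (Finset (Fin n) → G) :=
  {c | (∀ S : Finset (Fin n), d < S.card → c S = 0) ∧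
    (1 - (2 : ℝ) ^ (-(d : ℤ)) + ε) * 2 ^ n ≤
      ((Finset.univ.filter (fun x : Fin n → Bool => g x = evalPoly c x)).card : ℝ)}

section Helpers
variable {G : Type*} [AddCommGroup G] {n d : ℕ}

lemma evalPoly_hom {G' : Type*} [AddCommGroup G'] (φ : G →+ G') (c : Finset (Fin n) → G)
    (x : Fin n → Bool) :
    evalPoly (fun S => φ (c S)) x = φ (evalPoly c x) := by
  unfold evalPoly
  rw [map_sum]
  refine Finset.sum_congr rfl fun S _ => ?_
  by_cases h : ∀ i ∈ S, x i = true
  · rw [if_pos h, if_pos h]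
  · rw [if_neg h, if_neg h, map_zero]

lemma evalPoly_sub (c c' : Finset (Fin n) → G) (x : Fin n → Bool) :
    evalPoly (c - c') x = evalPoly c x - evalPoly c' x := by
  unfold evalPoly
  rw [← Finset.sum_sub_distrib]
  refine Finset.sum_congr rfl fun S _ => ?_
  by_cases h : ∀ i ∈ S, x i = true
  · rw [if_pos h, if_pos h, if_pos h]; rfl
  · rw [if_neg h, if_neg h, if_neg h, sub_zero]

lemma neg_one_sum (B : Finset (Fin n)) :
    ∑ U ∈ B.powerset, (-1:ℤ)^(B.card - U.card) = if B = ∅ then 1 else 0 := by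
  have h : ∀ U ∈ B.powerset, (-1:ℤ)^(B.card - U.card) = (-1)^B.card * (-1)^U.card := by
    intro U hU
    have hUB : U.card ≤ B.card := Finset.card_le_card (Finset.mem_powerset.mp hU)
    have : B.card - U.card + 2 * U.card = B.card + U.card := by omega
    calc (-1:ℤ)^(B.card - U.card) = (-1:ℤ)^(B.card - U.card) * ((-1)^2)^U.card := by norm_num
      _ = (-1:ℤ)^(B.card - U.card + 2*U.card) := by rw [← pow_mul, ← pow_add]
      _ = (-1:ℤ)^(B.card + U.card) := by rw [this]
      _ = _ := by rw [pow_add]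
  rw [Finset.sum_congr rfl h, ← Finset.mul_sum, Finset.sum_powerset_neg_one_pow_card]
  by_cases hB : B = ∅ <;> simp [hB]

lemma coef_eq (S₀ A : Finset (Fin n)) :
    (∑ T ∈ S₀.powerset.filter (fun T => A ⊆ T), (-1:ℤ)^(S₀.card - T.card))
      = if A = S₀ then 1 else 0 := by
  by_cases hA : A ⊆ S₀
  · have hbij : ∑ T ∈ S₀.powerset.filter (fun T => A ⊆ T), (-1:ℤ)^(S₀.card - T.card)
        = ∑ U ∈ (S₀ \ A).powerset, (-1:ℤ)^((S₀ \ A).card - U.card) := by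
      refine Finset.sum_nbij' (fun T => T \ A) (fun U => A ∪ U) ?_ ?_ ?_ ?_ ?_
      · intro T hT
        simp only [Finset.mem_filter, Finset.mem_powerset] at hT
        exact Finset.mem_powerset.mpr (Finset.sdiff_subset_sdiff hT.1 le_rfl)
      · intro U hU
        simp only [Finset.mem_powerset] at hU
        simp only [Finset.mem_filter, Finset.mem_powerset]
        exact ⟨Finset.union_subset hA (hU.trans (Finset.sdiff_subset)), Finset.subset_union_left⟩
      · intro T hT
        simp only [Finset.mem_filter, Finset.mem_powerset] at hT
        exact Finset.union_sdiff_of_subset hT.2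
      · intro U hU
        simp only [Finset.mem_powerset] at hU
        have : Disjoint A U := Finset.disjoint_left.mpr fun a haA haU =>
          (Finset.mem_sdiff.mp (hU haU)).2 haA
        exact Finset.union_sdiff_cancel_left this
      · intro T hT
        simp only [Finset.mem_filter, Finset.mem_powerset] at hT
        congr 1
        have h1 : (T \ A).card = T.card - A.card := Finset.card_sdiff_of_subset hT.2
        have h2 : (S₀ \ A).card = S₀.card - A.card := Finset.card_sdiff_of_subset hA
        have h3 : A.card ≤ T.card := Finset.card_le_card hT.2
        have h4 : T.card ≤ S₀.card := Finset.card_le_card hT.1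
        omega
    rw [hbij, neg_one_sum]
    have hiff : S₀ \ A = ∅ ↔ A = S₀ := by
      rw [Finset.sdiff_eq_empty_iff_subset]
      exact ⟨fun h => Finset.Subset.antisymm hA h, fun h => h ▸ Finset.Subset.refl _⟩
    exact if_congr hiff rfl rfl
  · have : S₀.powerset.filter (fun T => A ⊆ T) = ∅ := by
      rw [Finset.filter_eq_empty_iff]
      intro T hT hAT
      exact hA (hAT.trans (Finset.mem_powerset.mp hT))
    rw [this]
    have : A ≠ S₀ := fun h => hA (h ▸ le_rfl)
    simp [this]

lemma sz_identity (c : Finset (Fin n) → G) (S₀ : Finset (Fin n))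
    (hmax : ∀ S, c S ≠ 0 → S.card ≤ S₀.card)
    (v : Fin n → Bool) (hv : ∀ i ∈ S₀, v i = false) :
    ∑ T ∈ S₀.powerset, (-1:ℤ)^(S₀.card - T.card) •
      evalPoly c (fun i => if i ∈ T then true else v i) = c S₀ := by
  have hQ : ∀ (S T : Finset (Fin n)),
      (∀ i ∈ S, (if i ∈ T then true else v i) = true) ↔ S.filter (fun i => v i = false) ⊆ T := by
    intro S T
    constructor
    · intro h i hi
      obtain ⟨hiS, hvi⟩ := Finset.mem_filter.mp hi
      have := h i hiS
      by_cases hT : i ∈ T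
      · exact hT
      · rw [if_neg hT] at this; rw [this] at hvi; exact absurd hvi (by simp)
    · intro h i hiS
      by_cases hT : i ∈ T
      · rw [if_pos hT]
      · rw [if_neg hT]
        by_contra hvi
        exact hT (h (Finset.mem_filter.mpr ⟨hiS, by simpa using hvi⟩))
  calc ∑ T ∈ S₀.powerset, (-1:ℤ)^(S₀.card - T.card) •
      evalPoly c (fun i => if i ∈ T then true else v i)
      = ∑ T ∈ S₀.powerset, ∑ S : Finset (Fin n),
          (-1:ℤ)^(S₀.card - T.card) • (if ∀ i ∈ S, (if i ∈ T then true else v i) = true then c S else 0) := by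
        refine Finset.sum_congr rfl fun T _ => ?_
        rw [evalPoly, Finset.smul_sum]
    _ = ∑ S : Finset (Fin n), ∑ T ∈ S₀.powerset,
          (-1:ℤ)^(S₀.card - T.card) • (if ∀ i ∈ S, (if i ∈ T then true else v i) = true then c S else 0) :=
        Finset.sum_comm
    _ = ∑ S : Finset (Fin n),
          (∑ T ∈ S₀.powerset.filter (fun T => S.filter (fun i => v i = false) ⊆ T),
            (-1:ℤ)^(S₀.card - T.card)) • c S := by
        refine Finset.sum_congr rfl fun S _ => ?_
        rw [Finset.sum_smul]
        rw [Finset.sum_filter]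
        refine Finset.sum_congr rfl fun T _ => ?_
        by_cases h : ∀ i ∈ S, (if i ∈ T then true else v i) = true
        · rw [if_pos h, if_pos ((hQ S T).mp h)]
        · rw [if_neg h, if_neg (fun hh => h ((hQ S T).mpr hh)), smul_zero]
    _ = ∑ S : Finset (Fin n), (if S.filter (fun i => v i = false) = S₀ then (1:ℤ) else 0) • c S := by
        refine Finset.sum_congr rfl fun S _ => ?_
        rw [coef_eq]
    _ = c S₀ := by
        rw [Finset.sum_eq_single S₀]
        · have : S₀.filter (fun i => v i = false) = S₀ := Finset.filter_true_of_mem hv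
          rw [if_pos this, one_smul]
        · intro S _ hS
          by_cases hcS : c S = 0
          · rw [hcS, smul_zero]
          · by_cases hA : S.filter (fun i => v i = false) = S₀
            · exfalso
              have h1 : S₀ ⊆ S := hA ▸ Finset.filter_subset _ _
              exact hS (Finset.eq_of_subset_of_card_le h1 (hmax S hcS)).symm
            · rw [if_neg hA, zero_smul]
        · intro h
          exact absurd (Finset.mem_univ S₀) h

lemma sz_key (c : Finset (Fin n) → G) (S₀ : Finset (Fin n)) (hS₀ : c S₀ ≠ 0)
    (hmax : ∀ S, c S ≠ 0 → S.card ≤ S₀.card)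
    (v : Fin n → Bool) (hv : ∀ i ∈ S₀, v i = false) :
    ∃ T ∈ S₀.powerset, evalPoly c (fun i => if i ∈ T then true else v i) ≠ 0 := by
  by_contra hall
  push_neg at hall
  have := sz_identity c S₀ hmax v hv
  rw [Finset.sum_congr rfl (fun T hT => by rw [hall T hT, smul_zero])] at this
  rw [Finset.sum_const, smul_zero] at this
  exact hS₀ this.symm

lemma sz_count (c : Finset (Fin n) → G) (hc : c ≠ 0) (hdeg : ∀ S, d < S.card → c S = 0) :
    (2:ℝ)^n * (2:ℝ)^(-(d:ℤ)) ≤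
      ((Finset.univ.filter (fun x : Fin n → Bool => evalPoly c x ≠ 0)).card : ℝ) := by
  obtain ⟨S₁, hS₁⟩ : ∃ S, c S ≠ 0 := by
    by_contra h; push_neg at h; exact hc (funext h)
  have hne : (Finset.univ.filter (fun S : Finset (Fin n) => c S ≠ 0)).Nonempty :=
    ⟨S₁, Finset.mem_filter.mpr ⟨Finset.mem_univ _, hS₁⟩⟩
  obtain ⟨S₀, hS₀mem, hS₀max⟩ := Finset.exists_max_image _ Finset.card hne
  have hS₀ : c S₀ ≠ 0 := (Finset.mem_filter.mp hS₀mem).2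
  have hmax : ∀ S, c S ≠ 0 → S.card ≤ S₀.card := fun S hS =>
    hS₀max S (Finset.mem_filter.mpr ⟨Finset.mem_univ _, hS⟩)
  have hcard_d : S₀.card ≤ d := by
    by_contra h; push_neg at h; exact hS₀ (hdeg S₀ h)
  have hcard_n : S₀.card ≤ n := by
    have := Finset.card_le_univ S₀
    simpa using this
  have hvprop : ∀ w : {i : Fin n // i ∉ S₀} → Bool,
      ∀ i ∈ S₀, (fun j => if h : j ∈ S₀ then false else w ⟨j, h⟩) i = false := by
    intro w i hi; simp [hi]
  set Φ : ({ i : Fin n // i ∉ S₀ } → Bool) → (Fin n → Bool) := fun w =>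
    fun i => if i ∈ (sz_key c S₀ hS₀ hmax _ (hvprop w)).choose then true
      else if h : i ∈ S₀ then false else w ⟨i, h⟩ with hΦ
  have hΦmem : ∀ w, Φ w ∈ Finset.univ.filter (fun x : Fin n → Bool => evalPoly c x ≠ 0) := fun w =>
    Finset.mem_filter.mpr ⟨Finset.mem_univ _, (sz_key c S₀ hS₀ hmax _ (hvprop w)).choose_spec.2⟩
  have hΦout : ∀ w (i : Fin n) (h : i ∉ S₀), Φ w i = w ⟨i, h⟩ := by
    intro w i h
    have hT : (sz_key c S₀ hS₀ hmax _ (hvprop w)).choose ⊆ S₀ :=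
      Finset.mem_powerset.mp (sz_key c S₀ hS₀ hmax _ (hvprop w)).choose_spec.1
    have hiT : i ∉ (sz_key c S₀ hS₀ hmax _ (hvprop w)).choose := fun hi => h (hT hi)
    simp only [hΦ, if_neg hiT, dif_neg h]
  have hΦinj : Function.Injective Φ := by
    intro w w' hww
    funext j
    obtain ⟨i, hi⟩ := j
    rw [← hΦout w i hi, ← hΦout w' i hi, hww]
  have hcount : 2 ^ (n - S₀.card) ≤
      (Finset.univ.filter (fun x : Fin n → Bool => evalPoly c x ≠ 0)).card := by
    have hle := Finset.card_le_card_of_injOn (s := Finset.univ) Φ (fun w _ => hΦmem w) hΦinj.injOn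
    have hdom : (Finset.univ : Finset ({ i : Fin n // i ∉ S₀ } → Bool)).card
        = 2 ^ (n - S₀.card) := by
      rw [Finset.card_univ, Fintype.card_fun, Fintype.card_subtype_compl]
      simp [Fintype.card_coe]
    rwa [hdom] at hle
  have h2 : (2:ℝ)^n * (2:ℝ)^(-(d:ℤ)) ≤ (2:ℝ)^(n - S₀.card) := by
    rw [zpow_neg, zpow_natCast, ← div_eq_mul_inv, div_le_iff₀ (by positivity), ← pow_add]
    exact pow_le_pow_right₀ one_le_two (by omega)
  calc (2:ℝ)^n * (2:ℝ)^(-(d:ℤ)) ≤ (2:ℝ)^(n - S₀.card) := h2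
    _ = ((2 ^ (n - S₀.card) : ℕ) : ℝ) := by push_cast; ring
    _ ≤ _ := Nat.cast_le.mpr hcount

lemma agree_le (c c' : Finset (Fin n) → G) (hne : c ≠ c')
    (hdeg : ∀ S : Finset (Fin n), d < S.card → c S = 0)
    (hdeg' : ∀ S : Finset (Fin n), d < S.card → c' S = 0) :
    ((Finset.univ.filter (fun x : Fin n → Bool => evalPoly c x = evalPoly c' x)).card : ℝ)
      ≤ (1 - (2:ℝ)^(-(d:ℤ))) * 2 ^ n := by
  have heq : Finset.univ.filter (fun x : Fin n → Bool => evalPoly c x = evalPoly c' x)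
      = Finset.univ.filter (fun x : Fin n → Bool => ¬ (evalPoly (c - c') x ≠ 0)) := by
    refine Finset.filter_congr fun x _ => ?_
    rw [evalPoly_sub, not_not, sub_eq_zero]
  have hsplit := Finset.card_filter_add_card_filter_not
    (s := (Finset.univ : Finset (Fin n → Bool)))
    (p := fun x => evalPoly (c - c') x ≠ 0)
  have hcu : (Finset.univ : Finset (Fin n → Bool)).card = 2 ^ n := by
    rw [Finset.card_univ, Fintype.card_fun]; simp
  have hsz := sz_count (d := d) (c - c') (sub_ne_zero.mpr hne)
    (fun S hS => by simp [Pi.sub_apply, hdeg S hS, hdeg' S hS])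
  rw [heq]
  have h1 : ((Finset.univ.filter (fun x : Fin n → Bool => ¬ (evalPoly (c - c') x ≠ 0))).card : ℝ)
      = 2^n - ((Finset.univ.filter (fun x : Fin n → Bool => evalPoly (c - c') x ≠ 0)).card : ℝ) := by
    rw [hcu] at hsplit
    have hcast := congrArg (Nat.cast : ℕ → ℝ) hsplit
    push_cast at hcast
    linarith
  rw [h1]
  have : (1 - (2:ℝ)^(-(d:ℤ))) * 2 ^ n = 2^n - 2^n * (2:ℝ)^(-(d:ℤ)) := by ring
  rw [this]
  linarith [hsz]

end Helpers

set_option maxHeartbeats 1600000 in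
/-- Lifting list-size bounds from prime quotients to a finite Abelian group `G`:
if for every quotient of `G` by a cyclic subgroup of prime order (and also over
`ℤ_p` for every prime `p` dividing `|G|`) the number of degree-`≤d` polynomials
agreeing with any function on at least a `(1 − 2^{-d} + ε)` fraction of points is at
most `L`, then over `G` itself the number of such polynomials close to `f` is at
most `(1/ε)^{⌈log₂ L⌉}`. -/
theorem stmt19 (G : Type u) [AddCommGroup G] [Fintype G] (n d : ℕ) (ε : ℝ)
    (hε : 0 < ε) (L : ℕ) (f : (Fin n → Bool) → G)
    (hquot : ∀ H : AddSubgroup G,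
      (∃ h : G, H = AddSubgroup.zmultiples h ∧ (addOrderOf h).Prime) →
      ∀ g : (Fin n → Bool) → G ⧸ H, (agreeList n d ε g).ncard ≤ L)
    (hprime : ∀ p : ℕ, p.Prime → p ∣ Fintype.card G →
      ∀ g : (Fin n → Bool) → ZMod p, (agreeList n d ε g).ncard ≤ L) :
    ((agreeList n d ε f).ncard : ℝ) ≤ (1 / ε) ^ Nat.clog 2 L := by
  classical
  have hfin : (agreeList n d ε f).Finite := Set.toFinite _
  have hpow : (0:ℝ) < 2 ^ n := by positivity
  have hcu : ((Finset.univ : Finset (Fin n → Bool)).card : ℝ) = 2 ^ n := by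
    rw [Finset.card_univ, Fintype.card_fun]; simp
  by_cases hem : (agreeList n d ε f).Nonempty
  swap
  · rw [Set.not_nonempty_iff_eq_empty] at hem
    rw [hem, Set.ncard_empty, Nat.cast_zero]
    positivity
  obtain ⟨c₁, hc₁⟩ := hem
  have hδ1 : (2:ℝ) ^ (-(d:ℤ)) ≤ 1 := by
    rw [zpow_neg, zpow_natCast]
    exact inv_le_one_of_one_le₀ (one_le_pow₀ one_le_two)
  have hεδ : ε ≤ (2:ℝ) ^ (-(d:ℤ)) := by
    obtain ⟨hdeg1, hag1⟩ := hc₁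
    have hle : ((Finset.univ.filter (fun x : Fin n → Bool => f x = evalPoly c₁ x)).card : ℝ)
        ≤ 2 ^ n := by
      rw [← hcu]
      exact_mod_cast Finset.card_filter_le _ _
    nlinarith
  have hε1 : ε ≤ 1 := hεδ.trans hδ1
  have h1ε : 1 ≤ 1/ε := (le_div_iff₀ hε).mpr (by linarith)
  by_cases hsmall : (agreeList n d ε f).ncard ≤ 1
  · calc ((agreeList n d ε f).ncard : ℝ) ≤ 1 := by exact_mod_cast hsmall
      _ ≤ (1/ε) ^ Nat.clog 2 L := one_le_pow₀ h1ε
  push_neg at hsmall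
  obtain ⟨c₁', c₂', hc₁', hc₂', hne12⟩ := (Set.one_lt_ncard_iff hfin).mp hsmall
  have hpair : 2 * ε ≤ (2:ℝ) ^ (-(d:ℤ)) := by
    obtain ⟨hd1, ha1⟩ := hc₁'
    obtain ⟨hd2, ha2⟩ := hc₂'
    set A₁ := Finset.univ.filter (fun x : Fin n → Bool => f x = evalPoly c₁' x) with hA₁
    set A₂ := Finset.univ.filter (fun x : Fin n → Bool => f x = evalPoly c₂' x) with hA₂
    have hint : (A₁ ∩ A₂ : Finset _) ⊆
        Finset.univ.filter (fun x : Fin n → Bool => evalPoly c₁' x = evalPoly c₂' x) := by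
      intro x hx
      rw [Finset.mem_inter, hA₁, hA₂, Finset.mem_filter, Finset.mem_filter] at hx
      exact Finset.mem_filter.mpr ⟨hx.1.1, hx.1.2 ▸ hx.2.2⟩
    have hagree := agree_le c₁' c₂' hne12 hd1 hd2
    have hintc : ((A₁ ∩ A₂).card : ℝ) ≤ (1 - (2:ℝ)^(-(d:ℤ))) * 2^n :=
      le_trans (Nat.cast_le.mpr (Finset.card_le_card hint)) hagree
    have hia := congrArg (Nat.cast : ℕ → ℝ) (Finset.card_union_add_card_inter A₁ A₂)
    push_cast at hia
    have huni : ((A₁ ∪ A₂).card : ℝ) ≤ 2 ^ n := by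
      rw [← hcu]; exact_mod_cast Finset.card_le_univ _
    nlinarith
  have hGnt : Nontrivial G := by
    by_contra hG
    rw [not_nontrivial_iff_subsingleton] at hG
    exact hne12 (funext fun S => Subsingleton.elim _ _)
  have hcard1 : Fintype.card G ≠ 1 := Nat.ne_of_gt Fintype.one_lt_card
  obtain ⟨p, hp, hpd⟩ := Nat.exists_prime_and_dvd hcard1
  haveI : Fact p.Prime := ⟨hp⟩
  obtain ⟨h, hh⟩ := exists_prime_addOrderOf_dvd_card p hpd
  set H := AddSubgroup.zmultiples h with hH
  set π := QuotientAddGroup.mk' H with hπ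
  set 𝒮 := hfin.toFinset with h𝒮
  have hmcard : (agreeList n d ε f).ncard = 𝒮.card := Set.ncard_eq_toFinset_card _ hfin
  set F : (Finset (Fin n) → G) → (Finset (Fin n) → G ⧸ H) := fun c S => π (c S) with hF
  have himg : (𝒮.image F).card ≤ L := by
    have hsub : ((𝒮.image F : Finset _) : Set _) ⊆ agreeList n d ε (fun x => π (f x)) := by
      intro e he
      simp only [Finset.coe_image, Set.mem_image, Finset.mem_coe] at he
      obtain ⟨c, hc𝒮, rfl⟩ := he
      obtain ⟨hdegc, hagc⟩ := (Set.Finite.mem_toFinset hfin).mp hc𝒮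
      refine ⟨fun S hS => ?_, ?_⟩
      · show π (c S) = 0
        rw [hdegc S hS, map_zero]
      · refine le_trans hagc (Nat.cast_le.mpr (Finset.card_le_card ?_))
        intro x hx
        simp only [Finset.mem_filter] at hx ⊢
        refine ⟨hx.1, ?_⟩
        show π (f x) = evalPoly (fun S => π (c S)) x
        rw [evalPoly_hom π c x, hx.2]
    calc (𝒮.image F).card = ((𝒮.image F : Finset _) : Set _).ncard :=
          (Set.ncard_coe_finset _).symm
      _ ≤ (agreeList n d ε (fun x => π (f x))).ncard :=
          Set.ncard_le_ncard hsub (Set.toFinite _)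
      _ ≤ L := hquot H ⟨h, hH, by rw [hh]; exact hp⟩ _
  have hph : ((p:ℤ)) • h = 0 := by
    have h0 : (addOrderOf h) • h = 0 := addOrderOf_nsmul_eq_zero h
    rw [hh] at h0
    rw [natCast_zsmul]
    exact h0
  set φ : ZMod p →+ G := ZMod.lift p ⟨(zmultiplesHom G) h, by simpa using hph⟩ with hφdef
  have hφint : ∀ z : ℤ, φ ((z : ℤ) : ZMod p) = z • h := by
    intro z
    rw [hφdef, ZMod.lift_coe]
    exact zmultiplesHom_apply G h z
  have hφinj : Function.Injective φ := by
    rw [injective_iff_map_eq_zero]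
    intro a ha
    obtain ⟨z, rfl⟩ := ZMod.intCast_surjective a
    rw [hφint] at ha
    rw [ZMod.intCast_zmod_eq_zero_iff_dvd]
    have hdvd := addOrderOf_dvd_iff_zsmul_eq_zero.mpr ha
    rwa [hh] at hdvd
  have hφrange : ∀ g0 ∈ H, ∃ k : ZMod p, φ k = g0 := by
    intro g0 hg0
    obtain ⟨z, hz⟩ := AddSubgroup.mem_zmultiples_iff.mp hg0
    exact ⟨((z : ℤ) : ZMod p), by rw [hφint]; exact hz⟩
  have hφ0 : Function.invFun φ (0 : G) = 0 := by
    have h0 : φ 0 = 0 := map_zero φ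
    conv_lhs => rw [← h0]
    exact Function.leftInverse_invFun hφinj 0
  have hfiber : ∀ a ∈ 𝒮.image F, (𝒮.filter (fun c => F c = a)).card ≤ L := by
    intro a ha
    obtain ⟨c₀, hc₀𝒮, hc₀a⟩ := Finset.mem_image.mp ha
    obtain ⟨hdegc₀, hagc₀⟩ := (Set.Finite.mem_toFinset hfin).mp hc₀𝒮
    set g : (Fin n → Bool) → ZMod p := fun x => Function.invFun φ (f x - evalPoly c₀ x) with hg
    set E : (Finset (Fin n) → G) → (Finset (Fin n) → ZMod p) :=
      fun c S => Function.invFun φ (c S - c₀ S) with hE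
    have hEphi : ∀ c ∈ 𝒮.filter (fun c => F c = a), ∀ S, φ (E c S) = c S - c₀ S := by
      intro c hc S
      obtain ⟨hc𝒮, hca⟩ := Finset.mem_filter.mp hc
      apply Function.invFun_eq
      apply hφrange
      have h1 : π (c S) = π (c₀ S) := by
        rw [show π (c S) = F c S from rfl, show π (c₀ S) = F c₀ S from rfl, hca, hc₀a]
      obtain ⟨z, hzH, hz⟩ := (QuotientAddGroup.mk'_eq_mk' H).mp h1
      have hzz : c S - c₀ S = -z := by rw [← hz]; abel
      rw [hzz]
      exact H.neg_mem hzH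
    have hmem : ∀ c ∈ 𝒮.filter (fun c => F c = a), E c ∈ agreeList n d ε g := by
      intro c hc
      obtain ⟨hdegc, hagc⟩ :=
        (Set.Finite.mem_toFinset hfin).mp (Finset.mem_filter.mp hc).1
      refine ⟨fun S hS => ?_, ?_⟩
      · show Function.invFun φ (c S - c₀ S) = 0
        rw [hdegc S hS, hdegc₀ S hS, sub_zero]
        exact hφ0
      · refine le_trans hagc (Nat.cast_le.mpr (Finset.card_le_card ?_))
        intro x hx
        simp only [Finset.mem_filter] at hx ⊢
        refine ⟨hx.1, ?_⟩
        have h1 : φ (evalPoly (E c) x) = f x - evalPoly c₀ x := by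
          rw [← evalPoly_hom φ (E c) x]
          have hfe : (fun S => φ (E c S)) = fun S => c S - c₀ S := funext (hEphi c hc)
          rw [hfe, show (fun S => c S - c₀ S) = c - c₀ from rfl, evalPoly_sub, hx.2]
        show Function.invFun φ (f x - evalPoly c₀ x) = evalPoly (E c) x
        rw [← h1, Function.leftInverse_invFun hφinj]
    have hinjE : Set.InjOn E (𝒮.filter (fun c => F c = a)) := by
      intro c hc c' hc' hcc
      funext S
      have h1 : c S - c₀ S = c' S - c₀ S := by
        rw [← hEphi c (Finset.mem_coe.mp hc) S, ← hEphi c' (Finset.mem_coe.mp hc') S, hcc]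
      exact sub_left_inj.mp h1
    calc (𝒮.filter (fun c => F c = a)).card
        = ((𝒮.filter (fun c => F c = a)).image E).card :=
          (Finset.card_image_of_injOn hinjE).symm
      _ = ((↑((𝒮.filter (fun c => F c = a)).image E) : Set (Finset (Fin n) → ZMod p))).ncard :=
          (Set.ncard_coe_finset _).symm
      _ ≤ (agreeList n d ε g).ncard := by
          have hsub2 : ((↑((𝒮.filter (fun c => F c = a)).image E) : Set (Finset (Fin n) → ZMod p)))
              ⊆ agreeList n d ε g := by
            intro e he
            obtain ⟨c, hc, rfl⟩ := Finset.mem_image.mp he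
            exact hmem c hc
          exact Set.ncard_le_ncard hsub2 (Set.toFinite _)
      _ ≤ L := hprime p hp hpd g
  have hLL : 𝒮.card ≤ L * L := by
    calc 𝒮.card ≤ L * (𝒮.image F).card := Finset.card_le_mul_card_image 𝒮 L hfiber
      _ ≤ L * L := Nat.mul_le_mul_left L himg
  have hL2 : 2 ≤ L := by
    by_contra hL
    push_neg at hL
    have hL1 : L ≤ 1 := by omega
    have hLL1 : L * L ≤ 1 * 1 := Nat.mul_le_mul hL1 hL1
    rw [hmcard] at hsmall
    omega
  have hk1 : 1 ≤ Nat.clog 2 L := Nat.clog_pos one_lt_two hL2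
  have hLk : L ≤ 2 ^ Nat.clog 2 L := Nat.le_pow_clog one_lt_two L
  by_cases hε4 : ε ≤ 1/4
  · have h4 : (4:ℝ) ≤ 1/ε := (le_div_iff₀ hε).mpr (by linarith)
    have hLr : (L:ℝ) ≤ (2:ℝ) ^ Nat.clog 2 L := by exact_mod_cast hLk
    have hmr : ((agreeList n d ε f).ncard : ℝ) ≤ (L:ℝ) * L := by
      rw [hmcard]; exact_mod_cast hLL
    have hLnn : (0:ℝ) ≤ (L:ℝ) := Nat.cast_nonneg L
    calc ((agreeList n d ε f).ncard : ℝ) ≤ (L:ℝ) * L := hmr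
      _ ≤ (2:ℝ)^(Nat.clog 2 L) * (2:ℝ)^(Nat.clog 2 L) :=
          mul_le_mul hLr hLr hLnn (by positivity)
      _ = (4:ℝ)^(Nat.clog 2 L) := by rw [← mul_pow]; norm_num
      _ ≤ (1/ε)^(Nat.clog 2 L) := pow_le_pow_left₀ (by norm_num) h4 _
  · push_neg at hε4
    have hd0 : d = 0 := by
      by_contra hd
      have hd1 : 1 ≤ d := Nat.one_le_iff_ne_zero.mpr hd
      have h2d : (2:ℝ) ≤ 2^d := by
        calc (2:ℝ) = 2^1 := (pow_one 2).symm
          _ ≤ 2^d := pow_le_pow_right₀ one_le_two hd1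
      have hinv : (2:ℝ)^(-(d:ℤ)) ≤ 1/2 := by
        rw [zpow_neg, zpow_natCast]
        rw [show (1:ℝ)/2 = 2⁻¹ by norm_num]
        exact inv_anti₀ (by norm_num) h2d
      linarith
    subst hd0
    have hconst : ∀ c ∈ agreeList n 0 ε f, ∀ x, evalPoly c x = c ∅ := by
      intro c hc x
      rw [evalPoly, Finset.sum_eq_single ∅]
      · rw [if_pos (by simp)]
      · intro S _ hS
        rw [hc.1 S (Finset.card_pos.mpr (Finset.nonempty_iff_ne_empty.mpr hS))]
        simp
      · intro hmem
        exact absurd (Finset.mem_univ _) hmem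
    have hdisj : ∀ c ∈ 𝒮, ∀ c' ∈ 𝒮, c ≠ c' → Disjoint
        (Finset.univ.filter (fun x : Fin n → Bool => f x = evalPoly c x))
        (Finset.univ.filter (fun x : Fin n → Bool => f x = evalPoly c' x)) := by
      intro c hc c' hc' hne'
      rw [Finset.disjoint_left]
      intro x hx hx'
      apply hne'
      have h1 := (Finset.mem_filter.mp hx).2
      have h2 := (Finset.mem_filter.mp hx').2
      have hcl := (Set.Finite.mem_toFinset hfin).mp hc
      have hcl' := (Set.Finite.mem_toFinset hfin).mp hc'
      have he : c ∅ = c' ∅ := by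
        rw [← hconst c hcl x, ← hconst c' hcl' x, ← h1, ← h2]
      funext S
      by_cases hS : S = ∅
      · rw [hS]; exact he
      · have hcard : 0 < S.card := Finset.card_pos.mpr (Finset.nonempty_iff_ne_empty.mpr hS)
        rw [hcl.1 S hcard, hcl'.1 S hcard]
    have hsum : ∑ c ∈ 𝒮, (Finset.univ.filter (fun x : Fin n → Bool => f x = evalPoly c x)).card
        ≤ 2^n := by
      rw [← Finset.card_biUnion hdisj]
      calc _ ≤ (Finset.univ : Finset (Fin n → Bool)).card := Finset.card_le_univ _
        _ = 2^n := by exact_mod_cast hcu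
    have hlow : ∀ c ∈ 𝒮, ε * 2^n ≤
        ((Finset.univ.filter (fun x : Fin n → Bool => f x = evalPoly c x)).card : ℝ) := by
      intro c hc
      have hcl := (Set.Finite.mem_toFinset hfin).mp hc
      have hag := hcl.2
      have hone : (2:ℝ) ^ (-((0:ℕ):ℤ)) = 1 := by norm_num
      rw [hone] at hag
      linarith [hag]
    have hcount : (𝒮.card : ℝ) * (ε * 2^n) ≤ 2^n := by
      have hs := Finset.card_nsmul_le_sum 𝒮
        (fun c => ((Finset.univ.filter (fun x : Fin n → Bool => f x = evalPoly c x)).card : ℝ))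
        (ε * 2^n) hlow
      rw [nsmul_eq_mul] at hs
      have hcast : (∑ c ∈ 𝒮,
          ((Finset.univ.filter (fun x : Fin n → Bool => f x = evalPoly c x)).card : ℝ)) ≤ (2:ℝ)^n := by
        rw [← Nat.cast_sum]
        calc ((∑ c ∈ 𝒮, (Finset.univ.filter
              (fun x : Fin n → Bool => f x = evalPoly c x)).card : ℕ) : ℝ)
            ≤ ((2^n : ℕ) : ℝ) := Nat.cast_le.mpr hsum
          _ = (2:ℝ)^n := by push_cast; ring
      linarith
    have hm1ε : ((agreeList n 0 ε f).ncard : ℝ) ≤ 1/ε := by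
      rw [hmcard]
      have h1 : (𝒮.card : ℝ) * ε ≤ 1 := by nlinarith
      rw [le_div_iff₀ hε]
      exact h1
    calc ((agreeList n 0 ε f).ncard : ℝ) ≤ 1/ε := hm1ε
      _ ≤ (1/ε)^(Nat.clog 2 L) := le_self_pow₀ h1ε (by omega)
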